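/- arXiv:1711.07688 — 3 statements merged into one kernel-verified Lean document; each statement's English description precedes it below -/
import Mathlib

section
/- There exists a positive integer m such that for every nonzero nonnegative continuous function f : S → ℝ and every x ∈ S one has ((r+J)^m f)(x) > 0; the same conclusion holds with r+G in place of r+J. In particular, the positive operators r+J and r+G on C(S) are irreducible. -/
open MeasureTheory Filter Topology

/-- The operator (r+J) : f ↦ (x ↦ r(x)f(x) + ∫_S K(y,x)f(y)dy), acting on functions. -/
noncomputable def opJ {d : ℕ} (S : Set (EuclideanSpace ℝ (Fin d)))
    (r : EuclideanSpace ℝ (Fin d) → ℝ)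
    (K : EuclideanSpace ℝ (Fin d) → EuclideanSpace ℝ (Fin d) → ℝ)
    (f : EuclideanSpace ℝ (Fin d) → ℝ) : EuclideanSpace ℝ (Fin d) → ℝ :=
  fun x => r x * f x + ∫ y in S, K y x * f y

/-- The operator (r+G) : f ↦ (x ↦ r(x)f(x) + ∫_S K(x,y)f(y)dy), acting on functions. -/
noncomputable def opG {d : ℕ} (S : Set (EuclideanSpace ℝ (Fin d)))
    (r : EuclideanSpace ℝ (Fin d) → ℝ)
    (K : EuclideanSpace ℝ (Fin d) → EuclideanSpace ℝ (Fin d) → ℝ)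
    (f : EuclideanSpace ℝ (Fin d) → ℝ) : EuclideanSpace ℝ (Fin d) → ℝ :=
  fun x => r x * f x + ∫ y in S, K x y * f y


/-!
If `f ≥ 0` is positive at a point `z` of `S`, then `(r+J) f` is positive at every `x ∈ S` with
`|x - z| < ε₀`: the integrand `K(y,x) f(y)` is positive near `y = z`, and `S = closure Ω` gives
positive measure to every relative neighbourhood of its points. So `(r+J)^n f` is positive on all
points reached from a point where `f > 0` by an `ε₀`-chain of `n` jumps in `S`. As `S` is
compact and connected, a finite `ε₀`-net shows that one number `M` of jumps joins any two points.
The operator `r+G` is `r+J` for the transposed kernel.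
-/

open Set Function Metric

section Chain

variable {X : Type*} [PseudoMetricSpace X] {S : Set X} {ε : ℝ}

/-- `(chainStep S ε)^[n] {p}` is the set of points reached from `p` by chains of at most `n` jumps
of length `< ε` inside `S`. -/
def chainStep (S : Set X) (ε : ℝ) (A : Set X) : Set X := S ∩ thickening ε A

lemma mem_chainStep {A : Set X} {x : X} :
    x ∈ chainStep S ε A ↔ x ∈ S ∧ ∃ z ∈ A, dist x z < ε := by
  rw [chainStep, mem_inter_iff, mem_thickening_iff]

lemma chainStep_mono : Monotone (chainStep S ε) := fun _ _ h =>
  inter_subset_inter_right S (thickening_subset_of_subset ε h)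

lemma monotone_iterate_chainStep (hε : 0 < ε) {p : X} (hp : p ∈ S) :
    Monotone fun n => (chainStep S ε)^[n] {p} :=
  chainStep_mono.monotone_iterate_of_le_map
    (subset_inter (singleton_subset_iff.2 hp) (self_subset_thickening hε _))

lemma exists_mem_iterate_chainStep (hS : IsPreconnected S) (hε : 0 < ε) {x y : X}
    (hx : x ∈ S) (hy : y ∈ S) : ∃ n, y ∈ (chainStep S ε)^[n] {x} := by
  refine hS.induction₂' (fun x y => ∃ n, y ∈ (chainStep S ε)^[n] {x}) (fun x hxS => ?_)
    (fun x y z _ _ _ ⟨m, hm⟩ ⟨n, hn⟩ => ⟨n + m, ?_⟩) hx hy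
  · filter_upwards [self_mem_nhdsWithin, mem_nhdsWithin_of_mem_nhds (ball_mem_nhds x hε)]
      with y hyS hyx
    exact ⟨⟨1, mem_chainStep.2 ⟨hyS, x, rfl, hyx⟩⟩,
      ⟨1, mem_chainStep.2 ⟨hxS, y, rfl, mem_ball'.1 hyx⟩⟩⟩
  · rw [iterate_add_apply]
    exact chainStep_mono.iterate n (singleton_subset_iff.2 hm) hn

lemma exists_forall_subset_iterate_chainStep (hc : IsCompact S) (hS : IsPreconnected S)
    (hε : 0 < ε) : ∃ M, 0 < M ∧ ∀ p ∈ S, S ⊆ (chainStep S ε)^[M] {p} := by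
  obtain ⟨t, htS, ht, hcover⟩ := hc.finite_cover_balls hε
  have hnet : ∀ᶠ N in atTop, ∀ z ∈ t, ∀ w ∈ t, w ∈ (chainStep S ε)^[N] {z} := by
    refine (eventually_all_finite ht).2 fun z hz => (eventually_all_finite ht).2 fun w hw => ?_
    obtain ⟨n, hn⟩ := exists_mem_iterate_chainStep hS hε (htS hz) (htS hw)
    exact eventually_atTop.2 ⟨n, fun N hN => monotone_iterate_chainStep hε (htS hz) hN hn⟩
  obtain ⟨N, hN⟩ := hnet.exists
  refine ⟨N + 2, by omega, fun p hp x hx => ?_⟩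
  -- one jump from `p` into the net, `N` jumps inside the net, one jump from the net to `x`
  obtain ⟨z, hz, hpz⟩ := mem_iUnion₂.1 (hcover hp)
  obtain ⟨w, hw, hxw⟩ := mem_iUnion₂.1 (hcover hx)
  have hzp : {z} ⊆ chainStep S ε {p} :=
    singleton_subset_iff.2 (mem_chainStep.2 ⟨htS hz, p, rfl, mem_ball'.1 hpz⟩)
  rw [iterate_succ_apply', iterate_succ_apply]
  exact mem_chainStep.2 ⟨hx, w, chainStep_mono.iterate N hzp (hN z hz w hw), hxw⟩

lemma iterate_chainStep_subset_pos (T : (X → ℝ) → X → ℝ) (P : (X → ℝ) → Prop)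
    (hTP : ∀ f, P f → P (T f))
    (hT : ∀ f, P f → chainStep S ε {x ∈ S | 0 < f x} ⊆ {x ∈ S | 0 < T f x})
    {f : X → ℝ} (hf : P f) (n : ℕ) :
    (chainStep S ε)^[n] {x ∈ S | 0 < f x} ⊆ {x ∈ S | 0 < T^[n] f x} := by
  induction n generalizing f with
  | zero => exact subset_rfl
  | succ n ih =>
    rw [iterate_succ_apply, iterate_succ_apply]
    exact (chainStep_mono.iterate n (hT f hf)).trans (ih (hTP f hf))

end Chain

section Integral

variable {X : Type*} [TopologicalSpace X] [MeasurableSpace X] [OpensMeasurableSpace X]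
  {μ : Measure X}

lemma setIntegral_closure_pos [μ.IsOpenPosMeasure] {Ω : Set X} (hΩ : IsOpen Ω) {g : X → ℝ}
    (hg : ContinuousOn g (closure Ω)) (hg0 : ∀ x ∈ closure Ω, 0 ≤ g x)
    (hgi : IntegrableOn g (closure Ω) μ) {x₀ : X} (hx₀ : x₀ ∈ closure Ω) (hgx₀ : 0 < g x₀) :
    0 < ∫ x in closure Ω, g x ∂μ := by
  rw [setIntegral_pos_iff_support_of_nonneg_ae
    (ae_restrict_of_forall_mem isClosed_closure.measurableSet hg0) hgi]
  obtain ⟨V, hVo, hx₀V, hV⟩ :=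
    mem_nhdsWithin.1 ((hg x₀ hx₀).eventually (lt_mem_nhds hgx₀))
  calc 0 < μ (V ∩ Ω) := (hVo.inter hΩ).measure_pos μ (mem_closure_iff.1 hx₀ V hVo hx₀V)
    _ ≤ μ (support g ∩ closure Ω) := measure_mono fun y hy =>
      ⟨(hV ⟨hy.1, subset_closure hy.2⟩).ne', subset_closure hy.2⟩

lemma continuousOn_parametric_setIntegral {Y E : Type*} [TopologicalSpace Y]
    [FirstCountableTopology Y] [NormedAddCommGroup E] [NormedSpace ℝ E]
    [SecondCountableTopologyEither X E] [T2Space X] [IsFiniteMeasureOnCompacts μ]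
    {g : Y → X → E} {s : Set Y} {t : Set X} (hs : IsCompact s) (ht : IsCompact t)
    (hg : ContinuousOn (uncurry g) (s ×ˢ t)) :
    ContinuousOn (fun y => ∫ x in t, g y x ∂μ) s := by
  obtain ⟨C, hC⟩ := (hs.prod ht).exists_bound_of_continuousOn hg
  have hsec : ∀ y ∈ s, ContinuousOn (g y) t := fun y hy =>
    hg.comp (continuousOn_const.prodMk continuousOn_id) fun x hx => mk_mem_prod hy hx
  refine continuousOn_of_dominated (bound := fun _ => C)
    (fun y hy => (hsec y hy).aestronglyMeasurable ht.measurableSet)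
    (fun y hy => (ae_restrict_iff' ht.measurableSet).2
      (ae_of_all _ fun x hx => hC (y, x) (mk_mem_prod hy hx)))
    (integrableOn_const ht.measure_lt_top.ne)
    ((ae_restrict_iff' ht.measurableSet).2 (ae_of_all _ fun x hx => ?_))
  exact hg.comp (continuousOn_id.prodMk continuousOn_const) fun y hy => mk_mem_prod hy hx

end Integral

section Operator

variable {d : ℕ} {Ω S : Set (EuclideanSpace ℝ (Fin d))} {r : EuclideanSpace ℝ (Fin d) → ℝ}
  {k : EuclideanSpace ℝ (Fin d) → EuclideanSpace ℝ (Fin d) → ℝ}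
  {f : EuclideanSpace ℝ (Fin d) → ℝ} {ε : ℝ}

lemma opG_eq_opJ_flip (S : Set (EuclideanSpace ℝ (Fin d))) (r : EuclideanSpace ℝ (Fin d) → ℝ)
    (K : EuclideanSpace ℝ (Fin d) → EuclideanSpace ℝ (Fin d) → ℝ) :
    opG S r K = opJ S r (fun y x => K x y) :=
  rfl

lemma continuousOn_opJ (hS : IsCompact S) (hr : ContinuousOn r S)
    (hk : ContinuousOn (uncurry k) (S ×ˢ S)) (hf : ContinuousOn f S) :
    ContinuousOn (opJ S r k f) S :=
  (hr.mul hf).add <| continuousOn_parametric_setIntegral hS hS <|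
    (hk.comp continuous_swap.continuousOn fun _ hq => ⟨hq.2, hq.1⟩).mul
      (hf.comp continuousOn_snd fun _ hq => hq.2)

lemma opJ_nonneg (hS : MeasurableSet S) (hr0 : ∀ x ∈ S, 0 ≤ r x)
    (hk0 : ∀ y ∈ S, ∀ x ∈ S, 0 ≤ k y x) (hf0 : ∀ x ∈ S, 0 ≤ f x) {x} (hx : x ∈ S) :
    0 ≤ opJ S r k f x :=
  add_nonneg (mul_nonneg (hr0 x hx) (hf0 x hx))
    (setIntegral_nonneg hS fun y hy => mul_nonneg (hk0 y hy x hx) (hf0 y hy))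

lemma chainStep_subset_opJ_pos (hΩ : IsOpen Ω) (hS : IsCompact (closure Ω))
    (hr0 : ∀ x ∈ closure Ω, 0 ≤ r x) (hk : ContinuousOn (uncurry k) (closure Ω ×ˢ closure Ω))
    (hk0 : ∀ y ∈ closure Ω, ∀ x ∈ closure Ω, 0 ≤ k y x)
    (hkpos : ∀ y ∈ closure Ω, ∀ x ∈ closure Ω, dist y x < ε → 0 < k y x)
    (hf : ContinuousOn f (closure Ω)) (hf0 : ∀ x ∈ closure Ω, 0 ≤ f x) :
    chainStep (closure Ω) ε {x ∈ closure Ω | 0 < f x} ⊆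
      {x ∈ closure Ω | 0 < opJ (closure Ω) r k f x} := by
  intro x hx
  obtain ⟨hxS, z, ⟨hzS, hfz⟩, hxz⟩ := mem_chainStep.1 hx
  have hsec : ContinuousOn (fun y => k y x * f y) (closure Ω) :=
    (hk.comp (continuousOn_id.prodMk continuousOn_const) fun y hy => mk_mem_prod hy hxS).mul hf
  refine ⟨hxS, add_pos_of_nonneg_of_pos (mul_nonneg (hr0 x hxS) (hf0 x hxS)) ?_⟩
  exact setIntegral_closure_pos hΩ hsec (fun y hy => mul_nonneg (hk0 y hy x hxS) (hf0 y hy))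
    (hsec.integrableOn_compact hS) hzS (mul_pos (hkpos z hzS x hxS (by rwa [dist_comm])) hfz)

lemma iterate_opJ_pos (hΩ : IsOpen Ω) (hS : IsCompact (closure Ω))
    (hr : ContinuousOn r (closure Ω)) (hr0 : ∀ x ∈ closure Ω, 0 ≤ r x)
    (hk : ContinuousOn (uncurry k) (closure Ω ×ˢ closure Ω))
    (hk0 : ∀ y ∈ closure Ω, ∀ x ∈ closure Ω, 0 ≤ k y x)
    (hkpos : ∀ y ∈ closure Ω, ∀ x ∈ closure Ω, dist y x < ε → 0 < k y x) {M : ℕ}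
    (hM : ∀ p ∈ closure Ω, closure Ω ⊆ (chainStep (closure Ω) ε)^[M] {p})
    (hf : ContinuousOn f (closure Ω)) (hf0 : ∀ x ∈ closure Ω, 0 ≤ f x)
    (hfne : ∃ x ∈ closure Ω, f x ≠ 0) {x} (hx : x ∈ closure Ω) :
    0 < (opJ (closure Ω) r k)^[M] f x := by
  obtain ⟨p, hp, hfp⟩ := hfne
  have hpos := iterate_chainStep_subset_pos (opJ (closure Ω) r k)
    (fun g => ContinuousOn g (closure Ω) ∧ ∀ x ∈ closure Ω, 0 ≤ g x)
    (fun g hg => ⟨continuousOn_opJ hS hr hk hg.1,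
      fun _ hx => opJ_nonneg isClosed_closure.measurableSet hr0 hk0 hg.2 hx⟩)
    (fun g hg => chainStep_subset_opJ_pos hΩ hS hr0 hk hk0 hkpos hg.1 hg.2) ⟨hf, hf0⟩ M
  exact (hpos (chainStep_mono.iterate M
    (singleton_subset_iff.2 (show p ∈ {x ∈ closure Ω | 0 < f x} from
      ⟨hp, (hf0 p hp).lt_of_ne' hfp⟩)) (hM p hp hx))).2

end Operator

theorem stmt0_general {d : ℕ} (Ω S : Set (EuclideanSpace ℝ (Fin d)))
    (hΩopen : IsOpen Ω)
    (hΩconn : IsConnected Ω) (hSdef : S = closure Ω)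
    (hScomp : IsCompact S)
    (r : EuclideanSpace ℝ (Fin d) → ℝ) (hr : ContinuousOn r S)
    (hrpos : ∀ x ∈ S, 0 < r x)
    (K : EuclideanSpace ℝ (Fin d) → EuclideanSpace ℝ (Fin d) → ℝ)
    (hK : ContinuousOn (fun q : EuclideanSpace ℝ (Fin d) × EuclideanSpace ℝ (Fin d) =>
      K q.1 q.2) (S ×ˢ S))
    (hKnn : ∀ x ∈ S, ∀ y ∈ S, 0 ≤ K x y)
    (ε₀ c₀ : ℝ) (hε₀ : 0 < ε₀) (hc₀ : 0 < c₀)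
    (hKlb : ∀ x ∈ S, ∀ y ∈ S, dist y x < ε₀ → c₀ < K x y) :
    ∃ m : ℕ, 0 < m ∧
      (∀ f : EuclideanSpace ℝ (Fin d) → ℝ, ContinuousOn f S → (∀ x ∈ S, 0 ≤ f x) →
        (∃ x ∈ S, f x ≠ 0) → ∀ x ∈ S, 0 < (opJ S r K)^[m] f x) ∧
      (∀ f : EuclideanSpace ℝ (Fin d) → ℝ, ContinuousOn f S → (∀ x ∈ S, 0 ≤ f x) →
        (∃ x ∈ S, f x ≠ 0) → ∀ x ∈ S, 0 < (opG S r K)^[m] f x) := by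
  subst hSdef
  obtain ⟨M, hM0, hM⟩ :=
    exists_forall_subset_iterate_chainStep hScomp hΩconn.isPreconnected.closure hε₀
  have hr0 : ∀ x ∈ closure Ω, 0 ≤ r x := fun x hx => (hrpos x hx).le
  refine ⟨M, hM0, fun f hf hf0 hfne x hx => ?_, fun f hf hf0 hfne x hx => ?_⟩
  · exact iterate_opJ_pos hΩopen hScomp hr hr0 hK hKnn
      (fun y hy x hx hyx => hc₀.trans (hKlb y hy x hx (by rwa [dist_comm]))) hM hf hf0 hfne hx
  · rw [opG_eq_opJ_flip]
    exact iterate_opJ_pos (k := fun y x => K x y) hΩopen hScomp hr hr0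
      (hK.comp continuous_swap.continuousOn fun _ hq => ⟨hq.2, hq.1⟩)
      (fun y hy x hx => hKnn x hx y hy) (fun y hy x hx hyx => hc₀.trans (hKlb x hx y hy hyx))
      hM hf hf0 hfne hx

/-- There exists m ≥ 1 such that for every nonzero nonnegative continuous f on S and every
x ∈ S, ((r+J)^m f)(x) > 0, and likewise for r+G: the operators r+J and r+G are irreducible. -/
theorem stmt0 {d : ℕ} (Ω S : Set (EuclideanSpace ℝ (Fin d)))
    (hΩne : Ω.Nonempty) (hΩopen : IsOpen Ω) (hΩbdd : Bornology.IsBounded Ω)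
    (hΩconn : IsConnected Ω) (hSdef : S = closure Ω)
    (hScomp : IsCompact S) (hSvol : 0 < volume S)
    (r : EuclideanSpace ℝ (Fin d) → ℝ) (hr : ContinuousOn r S)
    (hrpos : ∀ x ∈ S, 0 < r x)
    (K : EuclideanSpace ℝ (Fin d) → EuclideanSpace ℝ (Fin d) → ℝ)
    (hK : ContinuousOn (fun q : EuclideanSpace ℝ (Fin d) × EuclideanSpace ℝ (Fin d) =>
      K q.1 q.2) (S ×ˢ S))
    (hKnn : ∀ x ∈ S, ∀ y ∈ S, 0 ≤ K x y)
    (ε₀ c₀ : ℝ) (hε₀ : 0 < ε₀) (hc₀ : 0 < c₀)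
    (hKlb : ∀ x ∈ S, ∀ y ∈ S, dist y x < ε₀ → c₀ < K x y) :
    ∃ m : ℕ, 0 < m ∧
      (∀ f : EuclideanSpace ℝ (Fin d) → ℝ, ContinuousOn f S → (∀ x ∈ S, 0 ≤ f x) →
        (∃ x ∈ S, f x ≠ 0) → ∀ x ∈ S, 0 < (opJ S r K)^[m] f x) ∧
      (∀ f : EuclideanSpace ℝ (Fin d) → ℝ, ContinuousOn f S → (∀ x ∈ S, 0 ≤ f x) →
        (∃ x ∈ S, f x ≠ 0) → ∀ x ∈ S, 0 < (opG S r K)^[m] f x) :=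
  stmt0_general Ω S hΩopen hΩconn hSdef hScomp r hr hrpos K hK hKnn ε₀ c₀ hε₀ hc₀ hKlb
end

section
/- The spectral radii of r+J and r+G coincide: lim_{n→∞} ‖(r+J)^n‖^{1/n} = lim_{n→∞} ‖(r+G)^n‖^{1/n}, where ‖·‖ denotes the operator norm on C(S) (both limits exist by submultiplicativity of the operator norm). -/
/-!
Let `k_m` be the kernel with `(r + G)^(m+1) f = r^(m+1) f + ∫ k_m(·, y) f(y) dy`; it is continuous
and nonnegative, and `(r + J)^(m+1)` has the transposed kernel. So `‖(r + G)^n‖` is controlled by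
the row integrals of `k_{n-1}` and `‖(r + J)^n‖` by its column integrals. Both limits exist by
Fekete's lemma: `log ‖T^n‖` is subadditive and at least `n log r(x)` for every `x`.

If `s` exceeds the limit for `r + G`, the row integrals are `O(s^m)`. The recursion
`k_{m+1}(x,y) = r(x)^{m+1} K(x,y) + k_m(x,y) r(y) + ∫ k_m(x,w) K(w,y) dw` then makes the column
integrals `O(m s^m)`: the last term integrates in `x` to at most `sup K` times the total mass of
`k_m`, which the row bounds control. Hence the limit for `r + J` is at most `s`, and exchanging `K`
with its transpose gives the reverse inequality.
-/

open MeasureTheory Filter Topology Function Set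

theorem exists_tendsto_norm_pow_rpow_one_div {A : Type*} [SeminormedRing A] (a : A) {c : ℝ}
    (hc : 0 < c) (h : ∀ n : ℕ, c ^ n ≤ ‖a ^ n‖) :
    ∃ ρ, Tendsto (fun n : ℕ => ‖a ^ n‖ ^ (1 / (n : ℝ))) atTop (𝓝 ρ) := by
  have hpos : ∀ n, 0 < ‖a ^ n‖ := fun n => (pow_pos hc n).trans_le (h n)
  have hsub : Subadditive fun n => Real.log ‖a ^ n‖ := fun m n => by
    rw [← Real.log_mul (hpos m).ne' (hpos n).ne']
    exact Real.log_le_log (hpos _) (pow_add a m n ▸ norm_mul_le _ _)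
  have hbdd : BddBelow (range fun n : ℕ => Real.log ‖a ^ n‖ / n) := by
    refine ⟨min (Real.log c) 0, forall_mem_range.2 fun n => ?_⟩
    rcases n.eq_zero_or_pos with rfl | hn
    · simp
    refine (min_le_left _ _).trans ((le_div_iff₀ (by exact_mod_cast hn)).2 ?_)
    rw [mul_comm, ← Real.log_pow]
    exact Real.log_le_log (pow_pos hc n) (h n)
  refine ⟨Real.exp hsub.lim,
    ((Real.continuous_exp.tendsto _).comp (hsub.tendsto_lim hbdd)).congr fun n => ?_⟩
  rw [comp_apply, Real.rpow_def_of_pos (hpos n), mul_one_div]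

section RootTest

variable {u : ℕ → ℝ} {ρ : ℝ}

theorem le_of_tendsto_rpow_of_pow_le {c : ℝ}
    (hu : Tendsto (fun n : ℕ => u n ^ (1 / (n : ℝ))) atTop (𝓝 ρ)) (hc : 0 ≤ c)
    (h : ∀ n, c ^ n ≤ u n) : c ≤ ρ := by
  refine ge_of_tendsto hu ?_
  filter_upwards [eventually_ne_atTop 0] with n hn0
  calc c = (c ^ n) ^ (1 / (n : ℝ)) := by rw [one_div, Real.pow_rpow_inv_natCast hc hn0]
    _ ≤ u n ^ (1 / (n : ℝ)) := by gcongr; exact h n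

theorem le_of_tendsto_rpow_of_le_pow {t : ℝ} (hu0 : ∀ n, 0 ≤ u n)
    (hu : Tendsto (fun n : ℕ => u n ^ (1 / (n : ℝ))) atTop (𝓝 ρ))
    (ht : 0 ≤ t) (h : ∀ᶠ n in atTop, u n ≤ t ^ n) : ρ ≤ t := by
  refine le_of_tendsto hu ?_
  filter_upwards [h, eventually_ne_atTop 0] with n hn hn0
  calc u n ^ (1 / (n : ℝ)) ≤ (t ^ n) ^ (1 / (n : ℝ)) := by gcongr; exact hu0 n
    _ = t := by rw [one_div, Real.pow_rpow_inv_natCast ht hn0]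

theorem exists_le_mul_pow_of_tendsto_rpow {s : ℝ} (hu0 : ∀ n, 0 ≤ u n)
    (hu : Tendsto (fun n : ℕ => u n ^ (1 / (n : ℝ))) atTop (𝓝 ρ)) (hs : ρ < s) :
    ∃ C, 0 ≤ C ∧ ∀ n, u n ≤ C * s ^ n := by
  have hs0 : 0 < s := (ge_of_tendsto' hu fun n => Real.rpow_nonneg (hu0 n) _).trans_lt hs
  have hev : ∀ᶠ n in atTop, u n / s ^ n ≤ 1 := by
    filter_upwards [hu.eventually_lt_const hs, eventually_ne_atTop 0] with n hn hn0
    rw [div_le_one (by positivity)]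
    calc u n = (u n ^ (1 / (n : ℝ))) ^ n := by
          rw [one_div, Real.rpow_inv_natCast_pow (hu0 n) hn0]
      _ ≤ s ^ n := by gcongr; exact Real.rpow_nonneg (hu0 n) _
  obtain ⟨C, hC⟩ := (isBoundedUnder_of_eventually_le hev).bddAbove_range
  refine ⟨C, (div_nonneg (hu0 0) (by positivity)).trans (hC ⟨0, rfl⟩), fun n => ?_⟩
  exact (div_le_iff₀ (by positivity)).1 (hC ⟨n, rfl⟩)

theorem le_of_tendsto_rpow_of_le_mul_pow {c s : ℝ} (hu0 : ∀ n, 0 ≤ u n)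
    (hu : Tendsto (fun n : ℕ => u n ^ (1 / (n : ℝ))) atTop (𝓝 ρ)) (hs : 0 ≤ s)
    (h : ∀ᶠ n in atTop, u n ≤ c * n * s ^ n) : ρ ≤ s := by
  refine le_of_forall_gt_imp_ge_of_dense fun t hst => ?_
  have ht : 0 < t := hs.trans_lt hst
  have hlim : Tendsto (fun n : ℕ => c * (n * (s / t) ^ n)) atTop (𝓝 0) := by
    simpa using (tendsto_self_mul_const_pow_of_lt_one (div_nonneg hs ht.le)
      ((div_lt_one ht).2 hst)).const_mul c
  refine le_of_tendsto_rpow_of_le_pow hu0 hu ht.le ?_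
  filter_upwards [h, hlim.eventually_le_const one_pos] with n hn hn'
  calc u n ≤ c * n * s ^ n := hn
    _ = c * (n * (s / t) ^ n) * t ^ n := by rw [div_pow]; field_simp
    _ ≤ t ^ n := mul_le_of_le_one_left (by positivity) hn'

end RootTest

theorem le_succ_mul_pow_of_le_mul_add {c : ℕ → ℝ} {s E : ℝ} (hs : 0 ≤ s) (h0 : c 0 ≤ E)
    (hstep : ∀ m, c (m + 1) ≤ s * c m + E * s ^ (m + 1)) :
    ∀ m : ℕ, c m ≤ (m + 1) * E * s ^ m
  | 0 => by simpa using h0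
  | m + 1 => calc
      c (m + 1) ≤ s * c m + E * s ^ (m + 1) := hstep m
      _ ≤ s * ((m + 1) * E * s ^ m) + E * s ^ (m + 1) := by
        gcongr; exact le_succ_mul_pow_of_le_mul_add hs h0 hstep m
      _ = ((m + 1 : ℕ) + 1) * E * s ^ (m + 1) := by push_cast; ring

theorem ContinuousLinearMap.apply_one_le_opNorm {α β : Type*} [TopologicalSpace α]
    [CompactSpace α] [TopologicalSpace β] [CompactSpace β] (T : C(α, ℝ) →L[ℝ] C(β, ℝ))
    (x : β) : T 1 x ≤ ‖T‖ :=
  calc T 1 x ≤ ‖T 1‖ := (le_abs_self _).trans ((T 1).norm_coe_le_norm x)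
    _ ≤ ‖T‖ * ‖(1 : C(α, ℝ))‖ := T.le_opNorm 1
    _ ≤ ‖T‖ := mul_le_of_le_one_right T.opNorm_nonneg
        ((ContinuousMap.norm_le _ zero_le_one).2 fun _ => by simp)

section Kernel

variable {α : Type*} [MeasurableSpace α] {ν : Measure α}

theorem integral_le_measureReal_mul [IsFiniteMeasure ν] {f : α → ℝ} {c : ℝ}
    (hf0 : ∀ x, 0 ≤ f x) (hfc : ∀ x, f x ≤ c) : ∫ x, f x ∂ν ≤ ν.real univ * c := by
  simpa using
    integral_mono_of_nonneg (ae_of_all _ hf0) (integrable_const c) (ae_of_all _ hfc)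

noncomputable def powKernel (ν : Measure α) (r : α → ℝ) (K : α → α → ℝ) : ℕ → α → α → ℝ
  | 0 => K
  | m + 1 => fun x y => r x ^ (m + 1) * K x y + powKernel ν r K m x y * r y
      + ∫ w, powKernel ν r K m x w * K w y ∂ν

theorem powKernel_nonneg {r : α → ℝ} {K : α → α → ℝ} (hr0 : ∀ x, 0 ≤ r x)
    (hK0 : ∀ x y, 0 ≤ K x y) : ∀ m x y, 0 ≤ powKernel ν r K m x y
  | 0, x, y => hK0 x y
  | m + 1, x, y => by
    have ih := powKernel_nonneg hr0 hK0 m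
    exact add_nonneg (add_nonneg (mul_nonneg (pow_nonneg (hr0 x) _) (hK0 x y))
      (mul_nonneg (ih x y) (hr0 y))) (integral_nonneg fun w => mul_nonneg (ih x w) (hK0 w y))

variable [TopologicalSpace α] [CompactSpace α]

theorem add_integral_le_opNorm {T : C(α, ℝ) →L[ℝ] C(α, ℝ)} {a : α → ℝ} {k : α → α → ℝ}
    (hT : ∀ f x, T f x = a x * f x + ∫ y, k x y * f y ∂ν) (x : α) :
    a x + ∫ y, k x y ∂ν ≤ ‖T‖ := by
  simpa [hT] using T.apply_one_le_opNorm x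

theorem pow_le_opNorm_pow_of_kernel {T : C(α, ℝ) →L[ℝ] C(α, ℝ)} {a : α → ℝ}
    {k : ℕ → α → α → ℝ}
    (hT : ∀ m f x, (T ^ (m + 1)) f x = a x ^ (m + 1) * f x + ∫ y, k m x y * f y ∂ν)
    (hk0 : ∀ m x y, 0 ≤ k m x y) (x : α) : ∀ n, a x ^ n ≤ ‖T ^ n‖
  | 0 => by
    have : Nonempty α := ⟨x⟩
    simp
  | m + 1 => le_of_add_le_of_nonneg_left (add_integral_le_opNorm (hT m) x)
      (integral_nonneg (hk0 m x))

variable [IsFiniteMeasure ν]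

theorem Continuous.integrable_of_compactSpace [OpensMeasurableSpace α] {f : α → ℝ}
    (hf : Continuous f) : Integrable f ν :=
  hf.integrable_of_hasCompactSupport (.of_compactSpace f)

theorem opNorm_le_of_kernel [OpensMeasurableSpace α] {T : C(α, ℝ) →L[ℝ] C(α, ℝ)} {a : α → ℝ}
    {k : α → α → ℝ} (hT : ∀ f x, T f x = a x * f x + ∫ y, k x y * f y ∂ν)
    (hk : ∀ x, Continuous (k x)) (hk0 : ∀ x y, 0 ≤ k x y) {M₁ M₂ : ℝ} (hM₁ : 0 ≤ M₁)
    (hM₂ : 0 ≤ M₂) (ha : ∀ x, |a x| ≤ M₁)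
    (hrow : ∀ x, ∫ y, k x y ∂ν ≤ M₂) : ‖T‖ ≤ M₁ + M₂ := by
  refine T.opNorm_le_bound (by positivity) fun f =>
    (ContinuousMap.norm_le _ (by positivity)).2 fun x => ?_
  have hf : ∀ y, |f y| ≤ ‖f‖ := f.norm_coe_le_norm
  have hint : ‖∫ y, k x y * f y ∂ν‖ ≤ (∫ y, k x y ∂ν) * ‖f‖ := by
    rw [← integral_mul_const]
    refine norm_integral_le_of_norm_le ((hk x).integrable_of_compactSpace.mul_const _)
      (ae_of_all _ fun y => ?_)
    rw [norm_mul, Real.norm_of_nonneg (hk0 x y)]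
    exact mul_le_mul_of_nonneg_left (hf y) (hk0 x y)
  calc ‖T f x‖ ≤ |a x| * |f x| + (∫ y, k x y ∂ν) * ‖f‖ := by
        rw [hT, ← abs_mul]; exact (norm_add_le _ _).trans (add_le_add le_rfl hint)
    _ ≤ M₁ * ‖f‖ + M₂ * ‖f‖ := by gcongr; exacts [ha x, hf x, hrow x]
    _ = (M₁ + M₂) * ‖f‖ := by ring

variable [SecondCountableTopology α] [BorelSpace α]

theorem integral_mul_integral_swap {k h : α → α → ℝ} {f : α → ℝ}
    (hk : Continuous (uncurry k)) (hh : Continuous (uncurry h)) (hf : Continuous f) (x : α) :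
    ∫ y, k x y * ∫ z, h y z * f z ∂ν ∂ν = ∫ z, (∫ y, k x y * h y z ∂ν) * f z ∂ν := by
  simp_rw [← integral_const_mul, ← integral_mul_const, mul_assoc]
  refine integral_integral_swap (Continuous.integrable_of_compactSpace ?_)
  fun_prop

variable [T2Space α] {r : α → ℝ} {K : α → α → ℝ}

theorem continuous_integral_of_continuous_uncurry {X : Type*} [TopologicalSpace X]
    [FirstCountableTopology X] [LocallyCompactSpace X] {k : X → α → ℝ}
    (hk : Continuous (uncurry k)) : Continuous fun x => ∫ y, k x y ∂ν := by
  simpa using continuous_parametric_integral_of_continuous (μ := ν) hk isCompact_univ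

theorem integral_kernel_comp {a b f : α → ℝ} {h k : α → α → ℝ} (ha : Continuous a)
    (hh : Continuous (uncurry h)) (hk : Continuous (uncurry k)) (hf : Continuous f) (x : α) :
    b x * (a x * f x + ∫ z, h x z * f z ∂ν)
        + ∫ y, k x y * (a y * f y + ∫ z, h y z * f z ∂ν) ∂ν
      = b x * a x * f x
        + ∫ y, (b x * h x y + k x y * a y + ∫ w, k x w * h w y ∂ν) * f y ∂ν := by
  have hhf : Continuous fun y => ∫ z, h y z * f z ∂ν :=
    continuous_integral_of_continuous_uncurry (by fun_prop)
  have hkh : Continuous fun y => ∫ w, k x w * h w y ∂ν :=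
    continuous_integral_of_continuous_uncurry (k := fun y w => k x w * h w y) (by fun_prop)
  have I : ∀ {g : α → ℝ}, Continuous g → Integrable g ν := (·.integrable_of_compactSpace)
  simp_rw [mul_add, add_mul]
  rw [integral_add (I (by fun_prop)) (I (by fun_prop)), integral_mul_integral_swap hk hh hf,
    integral_add (I (by fun_prop)) (I (by fun_prop)),
    integral_add (I (by fun_prop)) (I (by fun_prop)), ← integral_const_mul]
  simp_rw [mul_assoc]
  ring

theorem continuous_powKernel (hr : Continuous r) (hK : Continuous (uncurry K)) :
    ∀ m, Continuous (uncurry (powKernel ν r K m))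
  | 0 => hK
  | m + 1 => by
    have ih := continuous_powKernel hr hK m
    have hint : Continuous fun p : α × α => ∫ w, powKernel ν r K m p.1 w * K w p.2 ∂ν :=
      continuous_integral_of_continuous_uncurry
        (k := fun (p : α × α) w => powKernel ν r K m p.1 w * K w p.2) (by fun_prop)
    unfold powKernel
    fun_prop

theorem pow_succ_apply_of_kernel (hr : Continuous r) (hK : Continuous (uncurry K))
    {T : C(α, ℝ) →L[ℝ] C(α, ℝ)} (hT : ∀ f x, T f x = r x * f x + ∫ y, K x y * f y ∂ν)
    (m : ℕ) (f : C(α, ℝ)) (x : α) :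
    (T ^ (m + 1)) f x = r x ^ (m + 1) * f x + ∫ y, powKernel ν r K m x y * f y ∂ν := by
  induction m generalizing f x with
  | zero => simpa [powKernel] using hT f x
  | succ m ih =>
    rw [pow_succ, mul_apply_eq_comp, ih]
    simp_rw [hT]
    rw [integral_kernel_comp (b := fun x => r x ^ (m + 1)) hr hK (continuous_powKernel hr hK m)
      f.continuous, ← pow_succ]
    rfl

theorem pow_succ_apply_of_transpose_kernel (hr : Continuous r) (hK : Continuous (uncurry K))
    {T : C(α, ℝ) →L[ℝ] C(α, ℝ)} (hT : ∀ f x, T f x = r x * f x + ∫ y, K y x * f y ∂ν)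
    (m : ℕ) (f : C(α, ℝ)) (x : α) :
    (T ^ (m + 1)) f x = r x ^ (m + 1) * f x + ∫ y, powKernel ν r K m y x * f y ∂ν := by
  induction m generalizing f x with
  | zero => simpa [powKernel] using hT f x
  | succ m ih =>
    rw [pow_succ', mul_apply_eq_comp, hT]
    simp_rw [ih]
    rw [integral_kernel_comp (a := fun x => r x ^ (m + 1))
      (h := fun y z => powKernel ν r K m z y) (k := fun x y => K y x) (hr.pow _)
      ((continuous_powKernel hr hK m).comp continuous_swap) (hK.comp continuous_swap)
      f.continuous, ← pow_succ']
    congr 2 with y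
    simp only [powKernel, mul_comm (K _ x)]
    ring

theorem integral_powKernel_left_le (hr : Continuous r) (hK : Continuous (uncurry K))
    (hr0 : ∀ x, 0 ≤ r x) (hK0 : ∀ x y, 0 ≤ K x y) {s κ C : ℝ} (hs : 0 ≤ s) (hκ : 0 ≤ κ)
    (hC : 0 ≤ C) (hrs : ∀ x, r x ≤ s) (hKκ : ∀ x y, K x y ≤ κ)
    (hrow : ∀ m x, ∫ y, powKernel ν r K m x y ∂ν ≤ C * s ^ (m + 1)) (m : ℕ) (y : α) :
    ∫ x, powKernel ν r K m x y ∂ν ≤ (m + 1) * (ν.real univ * κ * (1 + C)) * s ^ m := by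
  have I : ∀ {g : α → ℝ}, Continuous g → Integrable g ν := (·.integrable_of_compactSpace)
  have hk0 := powKernel_nonneg (ν := ν) hr0 hK0
  refine le_succ_mul_pow_of_le_mul_add (c := fun m => ∫ x, powKernel ν r K m x y ∂ν) hs ?_
    (fun m => ?_) m
  · calc ∫ x, K x y ∂ν ≤ ν.real univ * κ := integral_le_measureReal_mul (hK0 · y) (hKκ · y)
      _ ≤ ν.real univ * κ * (1 + C) := le_mul_of_one_le_right (by positivity) (by linarith)
  have hk := continuous_powKernel (ν := ν) hr hK m
  have hint : Continuous fun x => ∫ w, powKernel ν r K m x w * K w y ∂ν :=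
    continuous_integral_of_continuous_uncurry
      (k := fun x w => powKernel ν r K m x w * K w y) (by fun_prop)
  have h1 : ∫ x, r x ^ (m + 1) * K x y ∂ν ≤ ν.real univ * (s ^ (m + 1) * κ) :=
    integral_le_measureReal_mul (fun x => mul_nonneg (pow_nonneg (hr0 x) _) (hK0 x y))
      fun x => mul_le_mul (pow_le_pow_left₀ (hr0 x) (hrs x) _) (hKκ x y) (hK0 x y)
        (by positivity)
  have h2 : ∫ x, powKernel ν r K m x y * r y ∂ν ≤ s * ∫ x, powKernel ν r K m x y ∂ν := by
    rw [integral_mul_const, mul_comm]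
    exact mul_le_mul_of_nonneg_right (hrs y) (integral_nonneg (hk0 m · y))
  have h3 : ∫ x, (∫ w, powKernel ν r K m x w * K w y ∂ν) ∂ν
      ≤ ν.real univ * (C * s ^ (m + 1) * κ) := by
    refine integral_le_measureReal_mul
      (fun x => integral_nonneg fun w => mul_nonneg (hk0 m x w) (hK0 w y)) fun x => ?_
    calc ∫ w, powKernel ν r K m x w * K w y ∂ν ≤ ∫ w, powKernel ν r K m x w * κ ∂ν :=
          integral_mono (I (by fun_prop)) (I (by fun_prop))
            fun w => mul_le_mul_of_nonneg_left (hKκ w y) (hk0 m x w)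
      _ = (∫ w, powKernel ν r K m x w ∂ν) * κ := integral_mul_const _ _
      _ ≤ C * s ^ (m + 1) * κ := by gcongr; exact hrow m x
  calc ∫ x, powKernel ν r K (m + 1) x y ∂ν
        = ∫ x, r x ^ (m + 1) * K x y ∂ν + ∫ x, powKernel ν r K m x y * r y ∂ν
          + ∫ x, (∫ w, powKernel ν r K m x w * K w y ∂ν) ∂ν := by
        simp only [powKernel]
        rw [integral_add (I (by fun_prop)) (I hint),
          integral_add (I (by fun_prop)) (I (by fun_prop))]
    _ ≤ s * ∫ x, powKernel ν r K m x y ∂ν + ν.real univ * κ * (1 + C) * s ^ (m + 1) := by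
        nlinarith [h1, h2, h3]

theorem le_of_tendsto_of_kernel_transpose (hr : Continuous r) (hK : Continuous (uncurry K))
    (hr0 : ∀ x, 0 ≤ r x) (hK0 : ∀ x y, 0 ≤ K x y) {TJ TG : C(α, ℝ) →L[ℝ] C(α, ℝ)}
    (hTJ : ∀ f x, TJ f x = r x * f x + ∫ y, K y x * f y ∂ν)
    (hTG : ∀ f x, TG f x = r x * f x + ∫ y, K x y * f y ∂ν) {ρJ ρG : ℝ}
    (hJ : Tendsto (fun n : ℕ => ‖TJ ^ n‖ ^ (1 / (n : ℝ))) atTop (𝓝 ρJ))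
    (hG : Tendsto (fun n : ℕ => ‖TG ^ n‖ ^ (1 / (n : ℝ))) atTop (𝓝 ρG)) : ρJ ≤ ρG := by
  have hk0 := powKernel_nonneg (ν := ν) hr0 hK0
  have hGpow := pow_succ_apply_of_kernel hr hK hTG
  have hrG : ∀ x, r x ≤ ρG := fun x =>
    le_of_tendsto_rpow_of_pow_le hG (hr0 x) (pow_le_opNorm_pow_of_kernel hGpow hk0 x)
  refine le_of_forall_gt_imp_ge_of_dense fun s hs => ?_
  have hs0 : 0 < s :=
    (ge_of_tendsto' hG fun n => Real.rpow_nonneg (TG ^ n).opNorm_nonneg _).trans_lt hs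
  have hrs : ∀ x, r x ≤ s := fun x => (hrG x).trans hs.le
  obtain ⟨C, hC0, hC⟩ :=
    exists_le_mul_pow_of_tendsto_rpow (fun n => (TG ^ n).opNorm_nonneg) hG hs
  have hrow : ∀ m x, ∫ y, powKernel ν r K m x y ∂ν ≤ C * s ^ (m + 1) := fun m x =>
    le_of_add_le_of_nonneg_right ((add_integral_le_opNorm (hGpow m) x).trans (hC _))
      (pow_nonneg (hr0 x) _)
  obtain ⟨κ, hκ⟩ := (isCompact_range hK).bddAbove
  have hKκ : ∀ x y, K x y ≤ max κ 0 := fun x y => (hκ ⟨(x, y), rfl⟩).trans (le_max_left κ 0)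
  set E := ν.real univ * max κ 0 * (1 + C)
  have hJnorm : ∀ m : ℕ, ‖TJ ^ (m + 1)‖ ≤ s ^ (m + 1) + (m + 1) * E * s ^ m := fun m =>
    opNorm_le_of_kernel (pow_succ_apply_of_transpose_kernel hr hK hTJ m)
      (fun x => (continuous_powKernel hr hK m).comp (Continuous.prodMk_left x))
      (fun x y => hk0 m y x) (by positivity) (by positivity)
      (fun x => (abs_of_nonneg (pow_nonneg (hr0 x) _)).trans_le
        (pow_le_pow_left₀ (hr0 x) (hrs x) _))
      (integral_powKernel_left_le hr hK hr0 hK0 hs0.le (le_max_right κ 0) hC0 hrs hKκ hrow m)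
  refine le_of_tendsto_rpow_of_le_mul_pow (c := 1 + E / s) (fun n => (TJ ^ n).opNorm_nonneg)
    hJ hs0.le (eventually_atTop.2 ⟨1, fun n hn => ?_⟩)
  obtain ⟨m, rfl⟩ := Nat.exists_eq_add_of_le' hn
  calc ‖TJ ^ (m + 1)‖ ≤ s ^ (m + 1) + (m + 1) * E * s ^ m := hJnorm m
    _ ≤ (1 + E / s) * (m + 1 : ℕ) * s ^ (m + 1) := by
        rw [pow_succ]; field_simp; push_cast; nlinarith

end Kernel

theorem stmt10_general {d : ℕ} (Ω S : Set (EuclideanSpace ℝ (Fin d)))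
    (hΩne : Ω.Nonempty) (hSdef : S = closure Ω) [CompactSpace S]
    (r : EuclideanSpace ℝ (Fin d) → ℝ) (hr : ContinuousOn r S)
    (hrpos : ∀ x ∈ S, 0 < r x)
    (K : EuclideanSpace ℝ (Fin d) → EuclideanSpace ℝ (Fin d) → ℝ)
    (hK : ContinuousOn (fun q : EuclideanSpace ℝ (Fin d) × EuclideanSpace ℝ (Fin d) =>
      K q.1 q.2) (S ×ˢ S))
    (hKnn : ∀ x ∈ S, ∀ y ∈ S, 0 ≤ K x y)
    (TJ TG : C(S, ℝ) →L[ℝ] C(S, ℝ))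
    (hTJ : ∀ f : C(S, ℝ), ∀ x : S,
      TJ f x = r (x : EuclideanSpace ℝ (Fin d)) * f x +
        ∫ y : S, K (y : EuclideanSpace ℝ (Fin d)) (x : EuclideanSpace ℝ (Fin d)) * f y
          ∂(volume.comap (Subtype.val : S → EuclideanSpace ℝ (Fin d))))
    (hTG : ∀ f : C(S, ℝ), ∀ x : S,
      TG f x = r (x : EuclideanSpace ℝ (Fin d)) * f x +
        ∫ y : S, K (x : EuclideanSpace ℝ (Fin d)) (y : EuclideanSpace ℝ (Fin d)) * f y
          ∂(volume.comap (Subtype.val : S → EuclideanSpace ℝ (Fin d)))) :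
    ∃ ρ : ℝ, Tendsto (fun n : ℕ => ‖TJ ^ n‖ ^ (1 / (n : ℝ))) atTop (𝓝 ρ) ∧
      Tendsto (fun n : ℕ => ‖TG ^ n‖ ^ (1 / (n : ℝ))) atTop (𝓝 ρ) := by
  obtain ⟨x₀⟩ : Nonempty S := (hΩne.mono (hSdef ▸ subset_closure)).to_subtype
  have : IsFiniteMeasure (volume.comap (Subtype.val : S → EuclideanSpace ℝ (Fin d))) :=
    ⟨(Measure.comap_apply_le _ _ nullMeasurableSet_univ).trans_lt <| by
      simpa only [image_univ] using
        (isCompact_range (continuous_subtype_val (p := (· ∈ S)))).measure_lt_top⟩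
  have hr' : Continuous fun x : S => r x := hr.domRestrict
  have hK' : Continuous (uncurry fun x y : S => K x y) :=
    hK.comp_continuous (continuous_subtype_val.prodMap continuous_subtype_val)
      fun p => mk_mem_prod p.1.2 p.2.2
  have hr0 : ∀ x : S, 0 ≤ r x := fun x => (hrpos x x.2).le
  have hK0 : ∀ x y : S, 0 ≤ K x y := fun x y => hKnn x x.2 y y.2
  have hk0 := powKernel_nonneg (ν := volume.comap (Subtype.val : S → _)) hr0 hK0
  obtain ⟨ρJ, hJ⟩ := exists_tendsto_norm_pow_rpow_one_div TJ (hrpos x₀ x₀.2)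
    (pow_le_opNorm_pow_of_kernel (pow_succ_apply_of_transpose_kernel hr' hK' hTJ)
      (fun m x y => hk0 m y x) x₀)
  obtain ⟨ρG, hG⟩ := exists_tendsto_norm_pow_rpow_one_div TG (hrpos x₀ x₀.2)
    (pow_le_opNorm_pow_of_kernel (pow_succ_apply_of_kernel hr' hK' hTG) hk0 x₀)
  have hJG := le_of_tendsto_of_kernel_transpose hr' hK' hr0 hK0 hTJ hTG hJ hG
  have hGJ := le_of_tendsto_of_kernel_transpose (K := fun x y : S => K y x) hr'
    (hK'.comp continuous_swap) hr0 (fun x y => hK0 y x) hTG hTJ hG hJ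
  exact ⟨ρJ, hJ, le_antisymm hGJ hJG ▸ hG⟩

/-- The spectral radii of the operators r+J and r+G on C(S) coincide:
lim ‖(r+J)^n‖^{1/n} = lim ‖(r+G)^n‖^{1/n} (both limits exist). -/
theorem stmt10 {d : ℕ} (Ω S : Set (EuclideanSpace ℝ (Fin d)))
    (hΩne : Ω.Nonempty) (hΩopen : IsOpen Ω) (hΩbdd : Bornology.IsBounded Ω)
    (hΩconn : IsConnected Ω) (hSdef : S = closure Ω)
    (hScomp : IsCompact S) [CompactSpace S] (hSvol : 0 < volume S)
    (r : EuclideanSpace ℝ (Fin d) → ℝ) (hr : ContinuousOn r S)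
    (hrpos : ∀ x ∈ S, 0 < r x)
    (K : EuclideanSpace ℝ (Fin d) → EuclideanSpace ℝ (Fin d) → ℝ)
    (hK : ContinuousOn (fun q : EuclideanSpace ℝ (Fin d) × EuclideanSpace ℝ (Fin d) =>
      K q.1 q.2) (S ×ˢ S))
    (hKnn : ∀ x ∈ S, ∀ y ∈ S, 0 ≤ K x y)
    (ε₀ c₀ : ℝ) (hε₀ : 0 < ε₀) (hc₀ : 0 < c₀)
    (hKlb : ∀ x ∈ S, ∀ y ∈ S, dist y x < ε₀ → c₀ < K x y)
    (TJ TG : C(S, ℝ) →L[ℝ] C(S, ℝ))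
    (hTJ : ∀ f : C(S, ℝ), ∀ x : S,
      TJ f x = r (x : EuclideanSpace ℝ (Fin d)) * f x +
        ∫ y : S, K (y : EuclideanSpace ℝ (Fin d)) (x : EuclideanSpace ℝ (Fin d)) * f y
          ∂(volume.comap (Subtype.val : S → EuclideanSpace ℝ (Fin d))))
    (hTG : ∀ f : C(S, ℝ), ∀ x : S,
      TG f x = r (x : EuclideanSpace ℝ (Fin d)) * f x +
        ∫ y : S, K (x : EuclideanSpace ℝ (Fin d)) (y : EuclideanSpace ℝ (Fin d)) * f y
          ∂(volume.comap (Subtype.val : S → EuclideanSpace ℝ (Fin d)))) :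
    ∃ ρ : ℝ, Tendsto (fun n : ℕ => ‖TJ ^ n‖ ^ (1 / (n : ℝ))) atTop (𝓝 ρ) ∧
      Tendsto (fun n : ℕ => ‖TG ^ n‖ ^ (1 / (n : ℝ))) atTop (𝓝 ρ) :=
  stmt10_general Ω S hΩne hSdef r hr hrpos K hK hKnn TJ TG hTJ hTG
end

section
/- For every λ > −D̲: the integrals defining r_λ and K_λ are finite; r_λ : S → ℝ and K_λ : S × S → ℝ are continuous; r_λ(x) > 0 for every x ∈ S; K_λ is nonnegative; and there exist ε₀' > 0 and c₀' > 0 such that K_λ(x,y) > c₀' for all x, y ∈ S with |y − x| < ε₀'. -/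
open MeasureTheory Filter Topology

/-- R_λ(x,a) = exp(−∫₀ᵃ D(x,α)dα − λa). -/
noncomputable def Rfun {d : ℕ} (D : EuclideanSpace ℝ (Fin d) → ℝ → ℝ) (lam : ℝ)
    (x : EuclideanSpace ℝ (Fin d)) (a : ℝ) : ℝ :=
  Real.exp (-(∫ α in (0:ℝ)..a, D x α) - lam * a)

/-- r_λ(x) = (1−p)∫₀^∞ B(x,a)R_λ(x,a)da. -/
noncomputable def rfun {d : ℕ} (B D : EuclideanSpace ℝ (Fin d) → ℝ → ℝ) (p lam : ℝ)
    (x : EuclideanSpace ℝ (Fin d)) : ℝ :=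
  (1 - p) * ∫ a in Set.Ioi (0:ℝ), B x a * Rfun D lam x a

/-- K_λ(x,y) = p∫₀^∞ B(x,a)k(x,a,y)R_λ(x,a)da. -/
noncomputable def Kfun {d : ℕ} (B D : EuclideanSpace ℝ (Fin d) → ℝ → ℝ)
    (k : EuclideanSpace ℝ (Fin d) → ℝ → EuclideanSpace ℝ (Fin d) → ℝ) (p lam : ℝ)
    (x y : EuclideanSpace ℝ (Fin d)) : ℝ :=
  p * ∫ a in Set.Ioi (0:ℝ), B x a * k x a y * Rfun D lam x a

/-!
Since `D ≥ D̲`, we have `R_λ(x,a) ≤ exp (-(D̲ + λ) a)`, so for bounded `B` and `k` both integrands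
are dominated, uniformly in `x` (and `y`), by a multiple of an integrable exponential: finiteness
and continuity of `r_λ` and `K_λ` follow by dominated convergence, the continuity of
`x ↦ R_λ(x,a)` coming from the compactness of `S × [0,a]`. By (A4) an open subinterval of
`(0,∞)` lies in both supports, so `B(x,·) k(x,·,y)` is nonzero, hence positive near some `a > 0`,
which makes the integral positive. Finally `K_λ` is continuous and positive on the compact set
`{(x,y) ∈ S² | |y - x| ≤ ε₀/2}`, so it has a positive minimum there.
-/

open Set
open scoped Interval

section ParametricIntegrals

variable {X : Type*} [TopologicalSpace X] [FirstCountableTopology X]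

theorem continuousOn_primitive_Ici {f : ℝ → ℝ} {a : ℝ} (hf : ContinuousOn f (Ici a)) :
    ContinuousOn (fun b => ∫ t in a..b, f t) (Ici a) := by
  intro b hb
  have hab : a ≤ b + 1 := by linarith [mem_Ici.1 hb]
  have hcont := intervalIntegral.continuousOn_primitive_interval (μ := volume)
    ((hf.mono ((uIcc_of_le hab).trans_subset Icc_subset_Ici_self)).integrableOn_compact
      isCompact_uIcc)
  rw [uIcc_of_le hab] at hcont
  exact (hcont b ⟨hb, by linarith⟩).mono_of_mem_nhdsWithin
    (inter_mem_nhdsWithin _ (Iic_mem_nhds (lt_add_one b)))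

theorem continuousOn_parametric_intervalIntegral_of_continuousOn {S : Set X} (hS : IsCompact S)
    {f : X → ℝ → ℝ} {a b : ℝ} (hf : ContinuousOn (Function.uncurry f) (S ×ˢ [[a, b]])) :
    ContinuousOn (fun x => ∫ t in a..b, f x t) S := by
  obtain ⟨C, hC⟩ := (hS.prod isCompact_uIcc).exists_bound_of_continuousOn hf
  intro x₀ hx₀
  refine intervalIntegral.continuousWithinAt_of_dominated_interval (bound := fun _ => C) ?_ ?_
    intervalIntegrable_const ?_
  · filter_upwards [self_mem_nhdsWithin] with x hx
    exact ((hf.uncurry_left x hx).mono uIoc_subset_uIcc).aestronglyMeasurable measurableSet_uIoc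
  · filter_upwards [self_mem_nhdsWithin] with x hx
    exact ae_of_all _ fun t ht => hC (x, t) ⟨hx, uIoc_subset_uIcc ht⟩
  · exact ae_of_all _ fun t ht => hf.uncurry_right t (uIoc_subset_uIcc ht) x₀ hx₀

theorem integrableOn_Ioi_of_le_exp {f : ℝ → ℝ} {C μ : ℝ} (hμ : 0 < μ)
    (hf : ContinuousOn f (Ioi 0)) (hle : ∀ a ∈ Ioi (0 : ℝ), ‖f a‖ ≤ C * Real.exp (-μ * a)) :
    IntegrableOn f (Ioi 0) :=
  ((exp_neg_integrableOn_Ioi 0 hμ).const_mul C).mono'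
    (hf.aestronglyMeasurable measurableSet_Ioi)
    ((ae_restrict_iff' measurableSet_Ioi).2 (ae_of_all _ hle))

theorem continuousOn_setIntegral_Ioi_of_le_exp {S : Set X} {F : X → ℝ → ℝ} {C μ : ℝ}
    (hμ : 0 < μ) (hFa : ∀ x ∈ S, ContinuousOn (F x) (Ioi 0))
    (hFx : ∀ a ∈ Ioi (0 : ℝ), ContinuousOn (fun x => F x a) S)
    (hle : ∀ x ∈ S, ∀ a ∈ Ioi (0 : ℝ), ‖F x a‖ ≤ C * Real.exp (-μ * a)) :
    ContinuousOn (fun x => ∫ a in Ioi 0, F x a) S :=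
  continuousOn_of_dominated (fun x hx => (hFa x hx).aestronglyMeasurable measurableSet_Ioi)
    (fun x hx => (ae_restrict_iff' measurableSet_Ioi).2 (ae_of_all _ (hle x hx)))
    ((exp_neg_integrableOn_Ioi 0 hμ).const_mul C)
    ((ae_restrict_iff' measurableSet_Ioi).2 (ae_of_all _ hFx))

end ParametricIntegrals

theorem setIntegral_pos_of_continuousOn {α : Type*} [TopologicalSpace α] [MeasurableSpace α]
    [OpensMeasurableSpace α] {μ : Measure α} [μ.IsOpenPosMeasure] {U : Set α} (hU : IsOpen U)
    {f : α → ℝ} (hf : ContinuousOn f U) (hfi : IntegrableOn f U μ) (hnn : ∀ x ∈ U, 0 ≤ f x)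
    {x₀ : α} (hx₀ : x₀ ∈ U) (hfx₀ : f x₀ ≠ 0) :
    0 < ∫ x in U, f x ∂μ := by
  rw [setIntegral_pos_iff_support_of_nonneg_ae
    ((ae_restrict_iff' hU.measurableSet).2 (ae_of_all _ hnn)) hfi]
  exact ((hf.isOpen_inter_preimage hU isOpen_compl_singleton).measure_pos μ
    ⟨x₀, hx₀, hfx₀⟩).trans_le (measure_mono fun x hx => ⟨hx.2, hx.1⟩)

theorem exists_pos_ne_zero_of_subset_tsupport {f g : ℝ → ℝ} {I : Set ℝ} (hI : I ⊆ Ici 0)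
    (hIint : (interior I).Nonempty) (hf : ContinuousOn f (Ici 0))
    (hIsub : I ⊆ tsupport g ∩ tsupport f) : ∃ a ∈ Ioi (0 : ℝ), f a ≠ 0 ∧ g a ≠ 0 := by
  have hUpos : interior I ⊆ Ioi 0 := interior_Ici (a := (0 : ℝ)) ▸ interior_mono hI
  obtain ⟨a₁, ha₁⟩ := hIint
  obtain ⟨b, hbU, hfb⟩ :=
    mem_closure_iff.1 (hIsub (interior_subset ha₁)).2 _ isOpen_interior ha₁
  obtain ⟨a, ⟨haU, hfa⟩, hga⟩ := mem_closure_iff.1 (hIsub (interior_subset hbU)).1 _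
    ((hf.mono (hUpos.trans Ioi_subset_Ici_self)).isOpen_inter_preimage isOpen_interior
      isOpen_compl_singleton) ⟨hbU, hfb⟩
  exact ⟨a, hUpos haU, hfa, hga⟩

theorem exists_pos_lt_of_pos_near_diagonal {Y : Type*} [PseudoMetricSpace Y] {S : Set Y}
    (hS : IsCompact S) {K : Y → Y → ℝ} (hK : ContinuousOn (Function.uncurry K) (S ×ˢ S))
    {ε : ℝ} (hε : 0 < ε) (hpos : ∀ x ∈ S, ∀ y ∈ S, dist y x < ε → 0 < K x y) :
    ∃ ε' > (0 : ℝ), ∃ c > (0 : ℝ), ∀ x ∈ S, ∀ y ∈ S, dist y x < ε' → c < K x y := by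
  have hT : IsCompact ((S ×ˢ S) ∩ {q | dist q.2 q.1 ≤ ε / 2}) :=
    (hS.prod hS).inter_right (isClosed_le (continuous_snd.dist continuous_fst) continuous_const)
  obtain ⟨c, hc, hcK⟩ := hT.exists_forall_le' (hK.mono inter_subset_left)
    fun q hq => hpos q.1 hq.1.1 q.2 hq.1.2 (hq.2.trans_lt (half_lt_self hε))
  exact ⟨ε / 2, half_pos hε, c / 2, half_pos hc, fun x hx y hy hxy =>
    (half_lt_self hc).trans_le (hcK (x, y) ⟨⟨hx, hy⟩, hxy.le⟩)⟩

section Rfun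

variable {d : ℕ} {D : EuclideanSpace ℝ (Fin d) → ℝ → ℝ} {Dlow lam : ℝ}

theorem Rfun_pos (x : EuclideanSpace ℝ (Fin d)) (a : ℝ) : 0 < Rfun D lam x a :=
  Real.exp_pos _

theorem Rfun_le_exp {x : EuclideanSpace ℝ (Fin d)} (hD : ContinuousOn (D x) (Ici 0))
    (hDlb : ∀ a ∈ Ici (0 : ℝ), Dlow ≤ D x a) {a : ℝ} (ha : 0 ≤ a) :
    Rfun D lam x a ≤ Real.exp (-(Dlow + lam) * a) := by
  have hint : Dlow * a ≤ ∫ α in (0 : ℝ)..a, D x α := by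
    simpa [mul_comm] using intervalIntegral.integral_mono_on (μ := volume) ha
      intervalIntegrable_const ((hD.mono Icc_subset_Ici_self).intervalIntegrable_of_Icc ha)
      fun t ht => hDlb t ht.1
  rw [Rfun, Real.exp_le_exp]
  linarith

theorem continuousOn_Rfun {x : EuclideanSpace ℝ (Fin d)}
    (hD : ContinuousOn (D x) (Ici 0)) : ContinuousOn (Rfun D lam x) (Ici 0) :=
  ((continuousOn_primitive_Ici hD).neg.sub (continuousOn_const.mul continuousOn_id)).rexp

theorem continuousOn_parametric_Rfun {S : Set (EuclideanSpace ℝ (Fin d))} (hS : IsCompact S)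
    (hD : ContinuousOn (Function.uncurry D) (S ×ˢ Ici 0)) {a : ℝ} (ha : 0 ≤ a) :
    ContinuousOn (fun x => Rfun D lam x a) S :=
  ((continuousOn_parametric_intervalIntegral_of_continuousOn hS
    (hD.mono (prod_mono_right ((uIcc_of_le ha).trans_subset Icc_subset_Ici_self)))).neg.sub
    continuousOn_const).rexp

theorem norm_mul_Rfun_le {x : EuclideanSpace ℝ (Fin d)} (hD : ContinuousOn (D x) (Ici 0))
    (hDlb : ∀ a ∈ Ici (0 : ℝ), Dlow ≤ D x a) {w C a : ℝ} (hw0 : 0 ≤ w) (hwC : w ≤ C)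
    (ha : 0 ≤ a) : ‖w * Rfun D lam x a‖ ≤ C * Real.exp (-(Dlow + lam) * a) := by
  rw [Real.norm_of_nonneg (mul_nonneg hw0 (Rfun_pos x a).le)]
  exact mul_le_mul hwC (Rfun_le_exp hD hDlb ha) (Rfun_pos x a).le (hw0.trans hwC)

theorem integrableOn_mul_Rfun {x : EuclideanSpace ℝ (Fin d)} (hD : ContinuousOn (D x) (Ici 0))
    (hDlb : ∀ a ∈ Ici (0 : ℝ), Dlow ≤ D x a) (hlam : -Dlow < lam) {w : ℝ → ℝ} {C : ℝ}
    (hw : ContinuousOn w (Ici 0)) (hw0 : ∀ a ∈ Ici (0 : ℝ), 0 ≤ w a)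
    (hwC : ∀ a ∈ Ici (0 : ℝ), w a ≤ C) :
    IntegrableOn (fun a => w a * Rfun D lam x a) (Ioi 0) :=
  integrableOn_Ioi_of_le_exp (by linarith)
    ((hw.mul (continuousOn_Rfun hD)).mono Ioi_subset_Ici_self) fun a ha =>
    norm_mul_Rfun_le hD hDlb (hw0 a (Ioi_subset_Ici_self ha)) (hwC a (Ioi_subset_Ici_self ha))
      ha.le

theorem setIntegral_mul_Rfun_pos {x : EuclideanSpace ℝ (Fin d)}
    (hD : ContinuousOn (D x) (Ici 0)) (hDlb : ∀ a ∈ Ici (0 : ℝ), Dlow ≤ D x a)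
    (hlam : -Dlow < lam) {w : ℝ → ℝ} {C : ℝ} (hw : ContinuousOn w (Ici 0))
    (hw0 : ∀ a ∈ Ici (0 : ℝ), 0 ≤ w a) (hwC : ∀ a ∈ Ici (0 : ℝ), w a ≤ C) {a₀ : ℝ}
    (ha₀ : a₀ ∈ Ioi (0 : ℝ)) (hwa₀ : w a₀ ≠ 0) :
    0 < ∫ a in Ioi 0, w a * Rfun D lam x a :=
  setIntegral_pos_of_continuousOn isOpen_Ioi
    ((hw.mul (continuousOn_Rfun hD)).mono Ioi_subset_Ici_self)
    (integrableOn_mul_Rfun hD hDlb hlam hw hw0 hwC)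
    (fun a ha => mul_nonneg (hw0 a (Ioi_subset_Ici_self ha)) (Rfun_pos x a).le) ha₀
    (mul_ne_zero hwa₀ (Rfun_pos x a₀).ne')

theorem continuousOn_setIntegral_mul_Rfun {X : Type*} [TopologicalSpace X]
    [FirstCountableTopology X] {S : Set (EuclideanSpace ℝ (Fin d))} (hS : IsCompact S)
    (hD : ContinuousOn (Function.uncurry D) (S ×ˢ Ici 0))
    (hDlb : ∀ x ∈ S, ∀ a ∈ Ici (0 : ℝ), Dlow ≤ D x a) (hlam : -Dlow < lam) {T : Set X}
    {π : X → EuclideanSpace ℝ (Fin d)} (hπ : ContinuousOn π T) (hπT : MapsTo π T S)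
    {w : X → ℝ → ℝ} {C : ℝ} (hw : ContinuousOn (Function.uncurry w) (T ×ˢ Ici 0))
    (hw0 : ∀ z ∈ T, ∀ a ∈ Ici (0 : ℝ), 0 ≤ w z a)
    (hwC : ∀ z ∈ T, ∀ a ∈ Ici (0 : ℝ), w z a ≤ C) :
    ContinuousOn (fun z => ∫ a in Ioi 0, w z a * Rfun D lam (π z) a) T := by
  have hDx : ∀ z ∈ T, ContinuousOn (D (π z)) (Ici 0) := fun z hz => hD.uncurry_left _ (hπT hz)
  refine continuousOn_setIntegral_Ioi_of_le_exp (by linarith)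
    (fun z hz => ((hw.uncurry_left z hz).mul (continuousOn_Rfun (hDx z hz))).mono
      Ioi_subset_Ici_self)
    (fun a ha => (hw.uncurry_right a ha.le).mul
      ((continuousOn_parametric_Rfun hS hD ha.le).comp hπ hπT))
    fun z hz a ha => norm_mul_Rfun_le (hDx z hz) (hDlb _ (hπT hz))
      (hw0 z hz a (Ioi_subset_Ici_self ha)) (hwC z hz a (Ioi_subset_Ici_self ha)) ha.le

end Rfun

theorem stmt12_general {d : ℕ}
    (S : Set (EuclideanSpace ℝ (Fin d)))
    (hScomp : IsCompact S)
    (B D : EuclideanSpace ℝ (Fin d) → ℝ → ℝ)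
    (hBcont : ContinuousOn (fun q : EuclideanSpace ℝ (Fin d) × ℝ => B q.1 q.2)
      (S ×ˢ Set.Ici 0))
    (hBbd : ∃ C, ∀ x ∈ S, ∀ a ∈ Set.Ici (0:ℝ), B x a ≤ C)
    (hBnn : ∀ x ∈ S, ∀ a ∈ Set.Ici (0:ℝ), 0 ≤ B x a)
    (Dlow : ℝ)
    (hDcont : ContinuousOn (fun q : EuclideanSpace ℝ (Fin d) × ℝ => D q.1 q.2)
      (S ×ˢ Set.Ici 0))
    (hDlb : ∀ x ∈ S, ∀ a ∈ Set.Ici (0:ℝ), Dlow ≤ D x a)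
    (k : EuclideanSpace ℝ (Fin d) → ℝ → EuclideanSpace ℝ (Fin d) → ℝ)
    (hkcont : ContinuousOn
      (fun q : EuclideanSpace ℝ (Fin d) × ℝ × EuclideanSpace ℝ (Fin d) => k q.1 q.2.1 q.2.2)
      (S ×ˢ (Set.Ici 0 ×ˢ S)))
    (hkbd : ∃ C, ∀ x ∈ S, ∀ a ∈ Set.Ici (0:ℝ), ∀ y ∈ S, k x a y ≤ C)
    (hknn : ∀ x ∈ S, ∀ a ∈ Set.Ici (0:ℝ), ∀ y ∈ S, 0 ≤ k x a y)
    (p : ℝ) (hp : p ∈ Set.Ioo (0:ℝ) 1)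
    (ε₀ : ℝ) (hε₀ : 0 < ε₀) (I : Set ℝ) (hI : I ⊆ Set.Ici 0)
    (hIint : (interior I).Nonempty)
    (hA4 : ∀ x ∈ S, ∀ y ∈ S, dist y x < ε₀ →
      I ⊆ tsupport (fun a => k x a y) ∩ tsupport (fun a => B x a))
    :
    ∀ lam : ℝ, -Dlow < lam →
      (∀ x ∈ S, IntegrableOn (fun a => B x a * Rfun D lam x a) (Set.Ioi 0) volume) ∧
      (∀ x ∈ S, ∀ y ∈ S,
        IntegrableOn (fun a => B x a * k x a y * Rfun D lam x a) (Set.Ioi 0) volume) ∧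
      ContinuousOn (rfun B D p lam) S ∧
      ContinuousOn (fun q : EuclideanSpace ℝ (Fin d) × EuclideanSpace ℝ (Fin d) =>
        Kfun B D k p lam q.1 q.2) (S ×ˢ S) ∧
      (∀ x ∈ S, 0 < rfun B D p lam x) ∧
      (∀ x ∈ S, ∀ y ∈ S, 0 ≤ Kfun B D k p lam x y) ∧
      (∃ ε₀' > (0:ℝ), ∃ c₀' > (0:ℝ), ∀ x ∈ S, ∀ y ∈ S, dist y x < ε₀' →
        c₀' < Kfun B D k p lam x y) := by
  intro lam hlam
  obtain ⟨CB, hCB⟩ := hBbd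
  obtain ⟨Ck, hCk⟩ := hkbd
  have hDa (x) (hx : x ∈ S) : ContinuousOn (D x) (Ici 0) := hDcont.uncurry_left x hx
  have hBa (x) (hx : x ∈ S) : ContinuousOn (B x) (Ici 0) := hBcont.uncurry_left x hx
  have hBk : ContinuousOn (fun (q : _ × _) a => B q.1 a * k q.1 a q.2).uncurry
      ((S ×ˢ S) ×ˢ Ici 0) :=
    (hBcont.comp (f := fun z : (EuclideanSpace ℝ (Fin d) × EuclideanSpace ℝ (Fin d)) × ℝ =>
      (z.1.1, z.2)) (by fun_prop) fun _ hz => ⟨hz.1.1, hz.2⟩).mul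
    (hkcont.comp (f := fun z : (EuclideanSpace ℝ (Fin d) × EuclideanSpace ℝ (Fin d)) × ℝ =>
      (z.1.1, z.2, z.1.2)) (by fun_prop) fun _ hz => ⟨hz.1.1, hz.2, hz.1.2⟩)
  have hBk0 (x) (hx : x ∈ S) (y) (hy : y ∈ S) (a) (ha : a ∈ Ici (0 : ℝ)) :
      0 ≤ B x a * k x a y :=
    mul_nonneg (hBnn x hx a ha) (hknn x hx a ha y hy)
  have hBkC (x) (hx : x ∈ S) (y) (hy : y ∈ S) (a) (ha : a ∈ Ici (0 : ℝ)) :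
      B x a * k x a y ≤ CB * Ck :=
    mul_le_mul (hCB x hx a ha) (hCk x hx a ha y hy) (hknn x hx a ha y hy)
      ((hBnn x hx a ha).trans (hCB x hx a ha))
  have hK_cont : ContinuousOn (fun q : EuclideanSpace ℝ (Fin d) × EuclideanSpace ℝ (Fin d) =>
      Kfun B D k p lam q.1 q.2) (S ×ˢ S) :=
    continuousOn_const.mul (continuousOn_setIntegral_mul_Rfun hScomp hDcont hDlb hlam
      continuousOn_fst (fun q hq => hq.1) hBk (fun q hq => hBk0 q.1 hq.1 q.2 hq.2)
      fun q hq => hBkC q.1 hq.1 q.2 hq.2)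
  have hsupp (x) (hx : x ∈ S) (y) (hy : y ∈ S) (hxy : dist y x < ε₀) :
      ∃ a ∈ Ioi (0 : ℝ), B x a ≠ 0 ∧ k x a y ≠ 0 :=
    exists_pos_ne_zero_of_subset_tsupport hI hIint (hBa x hx) (hA4 x hx y hy hxy)
  refine ⟨fun x hx => integrableOn_mul_Rfun (hDa x hx) (hDlb x hx) hlam (hBa x hx)
      (hBnn x hx) (hCB x hx),
    fun x hx y hy => integrableOn_mul_Rfun (hDa x hx) (hDlb x hx) hlam
      (hBk.uncurry_left (x, y) (mk_mem_prod hx hy)) (hBk0 x hx y hy) (hBkC x hx y hy),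
    continuousOn_const.mul (continuousOn_setIntegral_mul_Rfun hScomp hDcont hDlb hlam
      continuousOn_id (mapsTo_id S) hBcont hBnn hCB),
    hK_cont, fun x hx => ?_, fun x hx y hy => ?_,
    exists_pos_lt_of_pos_near_diagonal hScomp hK_cont hε₀ fun x hx y hy hxy => ?_⟩
  · obtain ⟨a, ha, hBa0, -⟩ := hsupp x hx x hx (by simpa using hε₀)
    exact mul_pos (sub_pos.2 hp.2) (setIntegral_mul_Rfun_pos (hDa x hx) (hDlb x hx) hlam
      (hBa x hx) (hBnn x hx) (hCB x hx) ha hBa0)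
  · exact mul_nonneg hp.1.le (setIntegral_nonneg measurableSet_Ioi fun a ha =>
      mul_nonneg (hBk0 x hx y hy a (Ioi_subset_Ici_self ha)) (Rfun_pos x a).le)
  · obtain ⟨a, ha, hBa0, hka0⟩ := hsupp x hx y hy hxy
    exact mul_pos hp.1 (setIntegral_mul_Rfun_pos (hDa x hx) (hDlb x hx) hlam
      (hBk.uncurry_left (x, y) (mk_mem_prod hx hy)) (hBk0 x hx y hy) (hBkC x hx y hy) ha
      (mul_ne_zero hBa0 hka0))

/-- For every λ > −D̲ the integrals defining r_λ and K_λ are finite, r_λ and K_λ are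
continuous, r_λ is positive on S, K_λ is nonnegative, and K_λ is bounded below by some
c₀' > 0 near the diagonal. -/
theorem stmt12 {d : ℕ}
    (Ω S : Set (EuclideanSpace ℝ (Fin d)))
    (hΩne : Ω.Nonempty) (hΩopen : IsOpen Ω) (hΩbdd : Bornology.IsBounded Ω)
    (hΩconn : IsConnected Ω) (hSdef : S = closure Ω) (hScomp : IsCompact S)
    (B D : EuclideanSpace ℝ (Fin d) → ℝ → ℝ)
    (hBcont : ContinuousOn (fun q : EuclideanSpace ℝ (Fin d) × ℝ => B q.1 q.2)
      (S ×ˢ Set.Ici 0))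
    (hBbd : ∃ C, ∀ x ∈ S, ∀ a ∈ Set.Ici (0:ℝ), B x a ≤ C)
    (hBnn : ∀ x ∈ S, ∀ a ∈ Set.Ici (0:ℝ), 0 ≤ B x a)
    (Dlow : ℝ) (hDlow : 0 < Dlow)
    (hDcont : ContinuousOn (fun q : EuclideanSpace ℝ (Fin d) × ℝ => D q.1 q.2)
      (S ×ˢ Set.Ici 0))
    (hDbd : ∃ C, ∀ x ∈ S, ∀ a ∈ Set.Ici (0:ℝ), D x a ≤ C)
    (hDlb : ∀ x ∈ S, ∀ a ∈ Set.Ici (0:ℝ), Dlow ≤ D x a)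
    (k : EuclideanSpace ℝ (Fin d) → ℝ → EuclideanSpace ℝ (Fin d) → ℝ)
    (hkcont : ContinuousOn
      (fun q : EuclideanSpace ℝ (Fin d) × ℝ × EuclideanSpace ℝ (Fin d) => k q.1 q.2.1 q.2.2)
      (S ×ˢ (Set.Ici 0 ×ˢ S)))
    (hkbd : ∃ C, ∀ x ∈ S, ∀ a ∈ Set.Ici (0:ℝ), ∀ y ∈ S, k x a y ≤ C)
    (hknn : ∀ x ∈ S, ∀ a ∈ Set.Ici (0:ℝ), ∀ y ∈ S, 0 ≤ k x a y)
    (p : ℝ) (hp : p ∈ Set.Ioo (0:ℝ) 1)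
    (ε₀ : ℝ) (hε₀ : 0 < ε₀) (I : Set ℝ) (hI : I ⊆ Set.Ici 0)
    (hIint : (interior I).Nonempty)
    (hA4 : ∀ x ∈ S, ∀ y ∈ S, dist y x < ε₀ →
      I ⊆ tsupport (fun a => k x a y) ∩ tsupport (fun a => B x a))
    :
    ∀ lam : ℝ, -Dlow < lam →
      (∀ x ∈ S, IntegrableOn (fun a => B x a * Rfun D lam x a) (Set.Ioi 0) volume) ∧
      (∀ x ∈ S, ∀ y ∈ S,
        IntegrableOn (fun a => B x a * k x a y * Rfun D lam x a) (Set.Ioi 0) volume) ∧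
      ContinuousOn (rfun B D p lam) S ∧
      ContinuousOn (fun q : EuclideanSpace ℝ (Fin d) × EuclideanSpace ℝ (Fin d) =>
        Kfun B D k p lam q.1 q.2) (S ×ˢ S) ∧
      (∀ x ∈ S, 0 < rfun B D p lam x) ∧
      (∀ x ∈ S, ∀ y ∈ S, 0 ≤ Kfun B D k p lam x y) ∧
      (∃ ε₀' > (0:ℝ), ∃ c₀' > (0:ℝ), ∀ x ∈ S, ∀ y ∈ S, dist y x < ε₀' →
        c₀' < Kfun B D k p lam x y) :=
  stmt12_general S hScomp B D hBcont hBbd hBnn Dlow hDcont hDlb k hkcont hkbd hknn p hp ε₀ hε₀ I hI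
    hIint hA4
end
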